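/- Assume Γ is connected. Let P̄ denote the subgroup of ℤΦ generated by the elements T_α − T_{−α} (α ∈ Φ); it is stable under the W-action. Let A be an abelian group equipped with an action of W by additive automorphisms, and let a_i ∈ A (i ∈ I) be elements such that s_i · a_i = −a_i for all i, s_i · a_j = a_j whenever i ≠ j are not joined by an edge of Γ, and s_i · a_j = s_j · a_i whenever i and j are joined by an edge. Then there exists a unique W-equivariant group homomorphism f : P̄ → A with f(T_{e_i} − T_{−e_i}) = a_i for all i ∈ I. -/

import Mathlib

/-!
Every root is `W`-conjugate to a simple root, and `w` maps `T_α - T_{-α}` to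
`T_{wα} - T_{-wα}`, so an equivariant `f` is determined by the `a_i`.

For existence one needs an odd `W`-equivariant map `b : Φ → A` with `b(e_i) = a_i`; then
`f(T_α - T_{-α}) = b(α)`. Negative definiteness makes every root positive or negative and
forces `B(α, e_i) ∈ [-2, 2]`, so a positive non-simple root `α` has a simple descent
`α - e_i = s_i α` with `B(α, e_i) = -1`. Define `b` on positive roots by
`b(α) = s_i · b(α - e_i)` along an arbitrary chain of descents. By induction on the height
this does not depend on the chain: two descents `i`, `j` are reconciled by
`s_i s_j = s_j s_i` and `s_i · a_j = a_j` if `i`, `j` are not adjacent, and by the braid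
relation and `s_i · a_j = s_j · a_i` if they are. Equivariance under each `s_j` then
follows from a case analysis on `B(α, e_j)`, with `s_j · a_j = -a_j` covering `α = e_j`.
-/
set_option linter.unusedSectionVars false

open Finset

noncomputable section

namespace ADE

variable {I : Type*} [Fintype I] [DecidableEq I]

/-- The coefficient matrix of the bilinear form attached to the graph `Γ`:
`-2` on the diagonal, `1` for adjacent pairs of vertices, `0` otherwise. -/
def cartan (G : SimpleGraph I) [DecidableRel G.Adj] : Matrix I I ℤ :=
  Matrix.of fun i j => if i = j then -2 else if G.Adj i j then 1 else 0

/-- The symmetric bilinear form `B` on `ℤ^I` determined by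
`B(e_i,e_i) = -2`, `B(e_i,e_j) = 1` for adjacent `i ≠ j`, and `0` otherwise. -/
def Bform (G : SimpleGraph I) [DecidableRel G.Adj] : LinearMap.BilinForm ℤ (I → ℤ) :=
  Matrix.toBilin' (cartan G)

/-- Negative definiteness of the induced real bilinear form on `ℝ^I`. -/
def NegDef (G : SimpleGraph I) [DecidableRel G.Adj] : Prop :=
  ∀ v : I → ℝ, v ≠ 0 → (∑ i, ∑ j, v i * (cartan G i j : ℝ) * v j) < 0

/-- `α ∈ ℤ^I` is a root when `B(α,α) = -2`. -/
def IsRoot (G : SimpleGraph I) [DecidableRel G.Adj] (α : I → ℤ) : Prop :=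
  Bform G α α = -2

variable (G : SimpleGraph I) [DecidableRel G.Adj]

lemma cartan_symm (i j : I) : cartan G i j = cartan G j i := by
  rcases eq_or_ne i j with h | h
  · subst h; rfl
  · by_cases hadj : G.Adj i j
    · simp [cartan, h, h.symm, hadj, hadj.symm]
    · have h' : ¬ G.Adj j i := fun hc => hadj hc.symm
      simp [cartan, h, h.symm, hadj, h']

lemma Bform_apply (v w : I → ℤ) :
    Bform G v w = ∑ i, ∑ j, v i * cartan G i j * w j :=
  Matrix.toBilin'_apply _ _ _

lemma Bform_comm (v w : I → ℤ) : Bform G v w = Bform G w v := by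
  rw [Bform_apply, Bform_apply, Finset.sum_comm]
  exact Finset.sum_congr rfl fun j _ => Finset.sum_congr rfl fun i _ => by
    rw [cartan_symm]; ring

lemma cartan_diag (i : I) : cartan G i i = -2 := by simp [cartan]

lemma Bform_single (i j : I) :
    Bform G (Pi.single i 1) (Pi.single j 1) = cartan G i j := by
  rw [Bform_apply]
  simp [Pi.single_apply]

lemma Bform_single_self (i : I) :
    Bform G (Pi.single i 1) (Pi.single i 1) = -2 := by
  rw [Bform_single, cartan_diag]

/-- `IsRoot` is preserved by negation. -/
lemma isRoot_neg {α : I → ℤ} (h : IsRoot G α) : IsRoot G (-α) := by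
  unfold IsRoot at h ⊢
  simpa [map_neg] using h

/-- The simple root `e_i` is a root. -/
lemma isRoot_single (i : I) : IsRoot G (Pi.single i 1) := Bform_single_self G i

/-- The reflection `s_i : v ↦ v + B(v,e_i)·e_i`. -/
def reflect (i : I) (v : I → ℤ) : I → ℤ :=
  v + Bform G v (Pi.single i 1) • Pi.single i 1

/-- The reflection `s_i` as a linear map. -/
def reflectLM (i : I) : (I → ℤ) →ₗ[ℤ] (I → ℤ) :=
  LinearMap.id + (LinearMap.toSpanSingleton ℤ (I → ℤ) (Pi.single i 1)).comp
    ((Bform G).flip (Pi.single i 1))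

lemma reflectLM_apply (i : I) (v : I → ℤ) : reflectLM G i v = reflect G i v := by
  simp [reflectLM, reflect, LinearMap.toSpanSingleton_apply]

/-- Reflections are isometries of `B`. -/
lemma Bform_reflect (i : I) (v w : I → ℤ) :
    Bform G (reflect G i v) (reflect G i w) = Bform G v w := by
  have h1 : Bform G (Pi.single i 1) w = Bform G w (Pi.single i 1) := Bform_comm G _ _
  simp only [reflect, map_add, map_smul, LinearMap.add_apply, LinearMap.smul_apply,
    smul_eq_mul, Bform_single_self, h1]
  ring

lemma reflect_reflect (i : I) (v : I → ℤ) : reflect G i (reflect G i v) = v := by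
  have h : Bform G (reflect G i v) (Pi.single i 1) = - Bform G v (Pi.single i 1) := by
    simp only [reflect, map_add, LinearMap.add_apply, map_smul, LinearMap.smul_apply,
      smul_eq_mul, Bform_single_self]
    ring
  conv_lhs => rw [reflect, h]
  rw [reflect, neg_smul, add_neg_cancel_right]

/-- The reflection `s_i` as a linear automorphism of `ℤ^I`. -/
def reflectEquiv (i : I) : (I → ℤ) ≃ₗ[ℤ] (I → ℤ) where
  __ := reflectLM G i
  invFun := reflect G i
  left_inv := fun v => by
    show reflect G i (reflectLM G i v) = v
    rw [reflectLM_apply]; exact reflect_reflect G i v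
  right_inv := fun v => by
    show reflectLM G i (reflect G i v) = v
    rw [reflectLM_apply]; exact reflect_reflect G i v

lemma reflectEquiv_apply (i : I) (v : I → ℤ) : reflectEquiv G i v = reflect G i v :=
  reflectLM_apply G i v

/-- The Weyl group `W`: the subgroup of the group of `ℤ`-linear automorphisms
of `ℤ^I` generated by the reflections `s_i`. -/
def Weyl : Subgroup ((I → ℤ) ≃ₗ[ℤ] (I → ℤ)) :=
  Subgroup.closure (Set.range (reflectEquiv G))

lemma reflectEquiv_inv (i : I) : (reflectEquiv G i)⁻¹ = reflectEquiv G i := by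
  apply LinearEquiv.toLinearMap_injective
  apply LinearMap.ext
  intro v
  have h1 : ((reflectEquiv G i)⁻¹ : (I → ℤ) ≃ₗ[ℤ] (I → ℤ)) v = (reflectEquiv G i).symm v := rfl
  show ((reflectEquiv G i)⁻¹ : (I → ℤ) ≃ₗ[ℤ] (I → ℤ)) v = reflectEquiv G i v
  rw [h1, reflectEquiv_apply]
  rfl

lemma isRoot_reflect (i : I) {α : I → ℤ} (h : IsRoot G α) : IsRoot G (reflect G i α) := by
  unfold IsRoot at h ⊢
  rw [Bform_reflect]; exact h

/-- Every element of the Weyl group maps roots to roots. -/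
lemma weyl_isRoot {w : (I → ℤ) ≃ₗ[ℤ] (I → ℤ)} (hw : w ∈ Weyl G) :
    ∀ α : I → ℤ, IsRoot G α → IsRoot G (w α) := by
  have main : (∀ α, IsRoot G α → IsRoot G (w α)) ∧ (∀ α, IsRoot G α → IsRoot G (w⁻¹ α)) := by
    induction hw using Subgroup.closure_induction with
    | mem x hx =>
        obtain ⟨i, rfl⟩ := hx
        constructor
        · intro α hα; rw [reflectEquiv_apply]; exact isRoot_reflect G i hα
        · intro α hα; rw [reflectEquiv_inv, reflectEquiv_apply]; exact isRoot_reflect G i hα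
    | one => exact ⟨fun α h => h, fun α h => by simpa using h⟩
    | mul x y hx hy ihx ihy =>
        refine ⟨fun α h => ?_, fun α h => ?_⟩
        · exact ihx.1 _ (ihy.1 _ h)
        · rw [mul_inv_rev]
          exact ihy.2 _ (ihx.2 _ h)
    | inv x hx ihx =>
        refine ⟨ihx.2, fun α h => ?_⟩
        rw [inv_inv]
        exact ihx.1 α h
  exact main.1

/-- The type of roots. -/
def Root := {α : I → ℤ // IsRoot G α}

/-- The simple root `e_i` as an element of `Root`. -/
def simpleRoot (i : I) : Root G := ⟨Pi.single i 1, isRoot_single G i⟩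

/-- Negation of a root. -/
def negRoot (α : Root G) : Root G := ⟨-α.1, isRoot_neg G α.2⟩

/-- The generator `s_i` as an element of the Weyl group. -/
def sGen (i : I) : ↥(Weyl G) := ⟨reflectEquiv G i, Subgroup.subset_closure ⟨i, rfl⟩⟩

/-- Action of a Weyl group element on roots. -/
def rootSmul (w : ↥(Weyl G)) (α : Root G) : Root G :=
  ⟨(w : (I → ℤ) ≃ₗ[ℤ] (I → ℤ)) α.1, weyl_isRoot G w.2 α.1 α.2⟩

/-- The equivalence relation identifying a root `α` with `±α`. -/
def rootSetoid : Setoid (Root G) where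
  r α β := α.1 = β.1 ∨ α.1 = -β.1
  iseqv := by
    refine ⟨fun α => Or.inl rfl, ?_, ?_⟩
    · rintro α β (h | h)
      · exact Or.inl h.symm
      · exact Or.inr (by rw [h, neg_neg])
    · rintro α β γ (h₁ | h₁) (h₂ | h₂)
      · exact Or.inl (h₁.trans h₂)
      · exact Or.inr (h₁.trans h₂)
      · exact Or.inr (by rw [h₁, h₂])
      · exact Or.inl (by rw [h₁, h₂, neg_neg])

/-- `Φ/±`: the quotient of the set of roots by the involution `α ↦ -α`. -/
def RootMod := Quotient (rootSetoid G)

/-- The class of a root in `Φ/±`. -/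
def rcls (α : Root G) : RootMod G := Quotient.mk (rootSetoid G) α

/-- The class `[e_i]` of a simple root in `Φ/±`. -/
def cls (i : I) : RootMod G := rcls G (simpleRoot G i)

/-- Action of a Weyl group element on `Φ/±`. -/
def rmodSmul (w : ↥(Weyl G)) : RootMod G → RootMod G :=
  Quotient.map (rootSmul G w) (by
    rintro α β (h | h)
    · exact Or.inl (by simp [rootSmul, h])
    · exact Or.inr (by simp [rootSmul, h, map_neg]))

/-- The action of `w ∈ W` on `ℤΦ` (the free abelian group on the roots). -/
def wZPhi (w : ↥(Weyl G)) : (Root G →₀ ℤ) →+ (Root G →₀ ℤ) :=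
  Finsupp.mapDomain.addMonoidHom (rootSmul G w)

/-- The action of `w ∈ W` on `ℤ[Φ/±]`. -/
def wZQ (w : ↥(Weyl G)) : (RootMod G →₀ ℤ) →+ (RootMod G →₀ ℤ) :=
  Finsupp.mapDomain.addMonoidHom (rmodSmul G w)

/-- The canonical projection `π : ℤΦ → ℤ[Φ/±]`, `T_α ↦ t_{[α]}`. -/
def piHom : (Root G →₀ ℤ) →+ (RootMod G →₀ ℤ) :=
  Finsupp.mapDomain.addMonoidHom (rcls G)

/-- The action of `w ∈ W` on `ℚ ⊗ ℤΦ = (Φ →₀ ℚ)`. -/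
def wZPhiQ (w : ↥(Weyl G)) : (Root G →₀ ℚ) →ₗ[ℚ] (Root G →₀ ℚ) :=
  Finsupp.lmapDomain ℚ ℚ (rootSmul G w)

/-- The action of `w ∈ W` on `ℚ ⊗ ℤ[Φ/±] = (Φ/± →₀ ℚ)`. -/
def wZQQ (w : ↥(Weyl G)) : (RootMod G →₀ ℚ) →ₗ[ℚ] (RootMod G →₀ ℚ) :=
  Finsupp.lmapDomain ℚ ℚ (rmodSmul G w)

/-- The projection `ℚ ⊗ ℤΦ → ℚ ⊗ ℤ[Φ/±]`. -/
def piHomQ : (Root G →₀ ℚ) →ₗ[ℚ] (RootMod G →₀ ℚ) :=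
  Finsupp.lmapDomain ℚ ℚ (rcls G)

/-- The subgroup `P̄ ⊂ ℤΦ` generated by the elements `T_α - T_{-α}`. -/
def Pbar : AddSubgroup (Root G →₀ ℤ) :=
  AddSubgroup.closure
    {x | ∃ α : Root G, x = Finsupp.single α 1 - Finsupp.single (negRoot G α) 1}

end ADE

open Multiplicative

namespace ADE

section Cartan

variable {I : Type*} [DecidableEq I] (G : SimpleGraph I) [DecidableRel G.Adj]

lemma cartan_of_adj {i j : I} (h : G.Adj i j) : cartan G i j = 1 := by
  simp [cartan, h.ne, h]

lemma cartan_of_ne_of_not_adj {i j : I} (hij : i ≠ j) (h : ¬ G.Adj i j) : cartan G i j = 0 := by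
  simp [cartan, hij, h]

lemma cartan_ne_neg_one (i j : I) : cartan G i j ≠ -1 := by
  simp only [cartan, Matrix.of_apply]
  split_ifs <;> decide

end Cartan

section Height

variable {I : Type*} [Fintype I]

def height (α : I → ℤ) : ℤ := ∑ i, α i

lemma one_le_height {α : I → ℤ} (h0 : 0 ≤ α) (hne : α ≠ 0) : 1 ≤ height α := by
  obtain ⟨k, hk⟩ := Function.ne_iff.1 hne
  calc 1 ≤ α k := by have := h0 k; simp only [Pi.zero_apply] at hk this; omega
    _ ≤ height α := single_le_sum (fun i _ => h0 i) (mem_univ k)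

lemma height_induction {p : (I → ℤ) → Prop}
    (ind : ∀ α, 0 ≤ α → (∀ β, 0 ≤ β → height β < height α → p β) → p α) :
    ∀ α, 0 ≤ α → p α := by
  suffices ∀ n : ℕ, ∀ α, 0 ≤ α → (height α).toNat = n → p α from
    fun α h => this _ α h rfl
  intro n
  induction n using Nat.strong_induction_on with
  | _ n ih =>
    rintro α h0 rfl
    refine ind α h0 fun β hβ hlt => ih _ ?_ β hβ rfl
    have : 0 ≤ height β := sum_nonneg fun i _ => hβ i
    omega

end Height

variable {I : Type*} [Fintype I] [DecidableEq I] (G : SimpleGraph I) [DecidableRel G.Adj]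

lemma height_sub_single (α : I → ℤ) (i : I) : height (α - Pi.single i 1) = height α - 1 := by
  simp [height, sum_sub_distrib]

lemma Bform_add_self (v w : I → ℤ) :
    Bform G (v + w) (v + w) = Bform G v v + 2 * Bform G v w + Bform G w w := by
  simp only [map_add, LinearMap.add_apply, Bform_comm G w v]
  ring

lemma Bform_sub_self (v w : I → ℤ) :
    Bform G (v - w) (v - w) = Bform G v v - 2 * Bform G v w + Bform G w w := by
  simp only [map_sub, LinearMap.sub_apply, Bform_comm G w v]
  ring

lemma Bform_sub_single (v : I → ℤ) (i j : I) :
    Bform G (v - Pi.single i 1) (Pi.single j 1) = Bform G v (Pi.single j 1) - cartan G i j := by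
  rw [map_sub, LinearMap.sub_apply, Bform_single]

lemma Bform_add_single (v : I → ℤ) (i j : I) :
    Bform G (v + Pi.single i 1) (Pi.single j 1) = Bform G v (Pi.single j 1) + cartan G i j := by
  rw [map_add, LinearMap.add_apply, Bform_single]

lemma Bform_self_eq_sum (α : I → ℤ) :
    Bform G α α = ∑ i, α i * Bform G α (Pi.single i 1) := by
  simp only [Bform_apply, Pi.single_apply, mul_ite, mul_one, mul_zero, sum_ite_eq', mem_univ,
    if_true, mul_sum]
  rw [sum_comm]
  exact sum_congr rfl fun _ _ => sum_congr rfl fun _ _ => by ring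

lemma even_Bform_self (v : I → ℤ) : Even (Bform G v v) := by
  rw [← univ_sum_single v]
  induction (univ : Finset I) using Finset.induction_on with
  | empty => simp
  | insert i s hi ih =>
    have hsingle : Bform G (Pi.single i (v i)) (Pi.single i (v i)) = 2 * -(v i * v i) := by
      simp [Bform_apply, Pi.single_apply, cartan_diag]
      ring
    rw [sum_insert hi, Bform_add_self, hsingle]
    exact ((even_two_mul _).add (even_two_mul _)).add ih

lemma Bform_self_neg (hneg : NegDef G) {v : I → ℤ} (hv : v ≠ 0) : Bform G v v < 0 := by
  have hv' : (fun i => (v i : ℝ)) ≠ 0 := fun h =>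
    hv (funext fun i => by simpa using congrFun h i)
  rw [Bform_apply]
  exact_mod_cast hneg _ hv'

lemma Bform_self_le_neg_two (hneg : NegDef G) {v : I → ℤ} (hv : v ≠ 0) :
    Bform G v v ≤ -2 := by
  obtain ⟨k, hk⟩ := even_Bform_self G v
  have := Bform_self_neg G hneg hv
  omega

lemma Bform_self_nonpos (hneg : NegDef G) (v : I → ℤ) : Bform G v v ≤ 0 := by
  rcases eq_or_ne v 0 with rfl | hv
  · simp
  · exact (Bform_self_neg G hneg hv).le

lemma reflect_eq_add_smul (i : I) (v : I → ℤ) :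
    reflect G i v = v + Bform G v (Pi.single i 1) • Pi.single i 1 := rfl

lemma reflect_single_self (i : I) : reflect G i (Pi.single i 1) = -Pi.single i 1 := by
  rw [reflect_eq_add_smul, Bform_single_self]
  module

variable {G}

namespace IsRoot

lemma ne_zero {α : I → ℤ} (hα : IsRoot G α) : α ≠ 0 := by
  rintro rfl
  simp [IsRoot] at hα

lemma not_nonpos_of_nonneg {α : I → ℤ} (hα : IsRoot G α) (h0 : 0 ≤ α) : ¬ α ≤ 0 :=
  fun h => hα.ne_zero (le_antisymm h h0)

lemma smul {α : I → ℤ} (hα : IsRoot G α) (w : Weyl G) : IsRoot G (w • α) :=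
  weyl_isRoot G w.2 α hα

lemma nonneg_or_nonpos (hneg : NegDef G) {α : I → ℤ} (hα : IsRoot G α) :
    0 ≤ α ∨ α ≤ 0 := by
  -- `B(α⁺, α⁻) ≥ 0`, so `-2 = B(α, α) ≤ B(α⁺, α⁺) + B(α⁻, α⁻)`, while both terms are `≤ -2`
  by_contra! h
  have hp : α⁺ ≠ 0 := fun h0 => h.2 (posPart_eq_zero.1 h0)
  have hq : α⁻ ≠ 0 := fun h0 => h.1 (negPart_eq_zero.1 h0)
  have hpq : 0 ≤ Bform G α⁺ α⁻ := by
    rw [Bform_apply]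
    refine sum_nonneg fun i _ => sum_nonneg fun j _ => ?_
    rw [Pi.posPart_apply, Pi.negPart_apply]
    rcases eq_or_ne i j with rfl | hij
    · rcases le_total 0 (α i) with h | h
      · simp [negPart_eq_zero.2 h]
      · simp [posPart_eq_zero.2 h]
    · have hc : 0 ≤ cartan G i j := by
        by_cases hadj : G.Adj i j
        · simp [cartan_of_adj G hadj]
        · simp [cartan_of_ne_of_not_adj G hij hadj]
      exact mul_nonneg (mul_nonneg (posPart_nonneg _) hc) (negPart_nonneg _)
  have hsplit := Bform_sub_self G α⁺ α⁻
  rw [posPart_sub_negPart] at hsplit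
  have := Bform_self_le_neg_two G hneg hp
  have := Bform_self_le_neg_two G hneg hq
  unfold IsRoot at hα
  omega

lemma Bform_le_two (hneg : NegDef G) {α β : I → ℤ} (hα : IsRoot G α)
    (hβ : IsRoot G β) :
    Bform G α β ≤ 2 := by
  have := Bform_self_nonpos G hneg (α + β)
  rw [Bform_add_self, hα, hβ] at this
  omega

lemma neg_two_le_Bform (hneg : NegDef G) {α β : I → ℤ} (hα : IsRoot G α)
    (hβ : IsRoot G β) :
    -2 ≤ Bform G α β := by
  have := Bform_self_nonpos G hneg (α - β)
  rw [Bform_sub_self, hα, hβ] at this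
  omega

lemma eq_of_Bform_eq_neg_two (hneg : NegDef G) {α β : I → ℤ} (hα : IsRoot G α)
    (hβ : IsRoot G β) (h : Bform G α β = -2) : α = β := by
  by_contra hne
  have := Bform_self_neg G hneg (sub_ne_zero.2 hne)
  rw [Bform_sub_self, hα, hβ, h] at this
  omega

lemma sub_single {α : I → ℤ} (hα : IsRoot G α) {i : I}
    (h : Bform G α (Pi.single i 1) = -1) : IsRoot G (α - Pi.single i 1) := by
  simpa [reflect_eq_add_smul, h, sub_eq_add_neg] using isRoot_reflect G i hα

lemma sub_single_nonneg (hneg : NegDef G) {α : I → ℤ} (hα : IsRoot G α) (h0 : 0 ≤ α)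
    {i : I} (h : Bform G α (Pi.single i 1) = -1) : 0 ≤ α - Pi.single i 1 := by
  refine ((hα.sub_single h).nonneg_or_nonpos hneg).resolve_right fun hle => ?_
  -- otherwise `e_i - α` would be a nonnegative root of height `1 - height α ≤ 0`
  have hroot : IsRoot G (Pi.single i 1 - α) := by simpa using isRoot_neg G (hα.sub_single h)
  have h1 := one_le_height (sub_nonneg.2 (sub_nonpos.1 hle)) hroot.ne_zero
  have h2 := one_le_height h0 hα.ne_zero
  have : height (Pi.single i 1 - α) = 1 - height α := by simp [height, sum_sub_distrib]
  omega

lemma exists_Bform_single_eq_neg_one (hneg : NegDef G) {α : I → ℤ} (hα : IsRoot G α)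
    (h0 : 0 ≤ α) (hns : ∀ i, α ≠ Pi.single i 1) :
    ∃ i, Bform G α (Pi.single i 1) = -1 := by
  -- `-2 = B(α, α) = ∑ α_i B(α, e_i)` needs a negative `B(α, e_i)`, and `-2` would force `α = e_i`
  by_contra! h
  have hterm : ∀ i, 0 ≤ α i * Bform G α (Pi.single i 1) := fun i => by
    have h2 : Bform G α (Pi.single i 1) ≠ -2 := fun h2 =>
      hns i (hα.eq_of_Bform_eq_neg_two hneg (isRoot_single G i) h2)
    have := hα.neg_two_le_Bform hneg (isRoot_single G i)
    exact mul_nonneg (h0 i) (by have := h i; omega)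
  have := sum_nonneg fun i (_ : i ∈ univ) => hterm i
  have := Bform_self_eq_sum G α
  unfold IsRoot at hα
  omega

end IsRoot

lemma sGen_smul (i : I) (v : I → ℤ) : sGen G i • v = reflect G i v :=
  reflectEquiv_apply G i v

lemma Weyl.ext {w w' : Weyl G} (h : ∀ v : I → ℤ, w • v = w' • v) : w = w' :=
  Subtype.ext (LinearEquiv.ext h)

variable (G) in
lemma closure_range_sGen : Subgroup.closure (Set.range (sGen G)) = ⊤ := by
  refine Eq.trans ?_ (Subgroup.closure_closure_coe_preimage (k := Set.range (reflectEquiv G)))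
  congr 1
  ext w
  constructor
  · rintro ⟨i, rfl⟩
    exact ⟨i, rfl⟩
  · rintro ⟨i, hi⟩
    exact ⟨i, Subtype.ext hi⟩

lemma sGen_mul_self (i : I) : sGen G i * sGen G i = 1 :=
  Weyl.ext fun v => by rw [mul_smul, sGen_smul, sGen_smul, reflect_reflect, one_smul]

lemma sGen_mul_comm {i j : I} (hij : i ≠ j) (hadj : ¬ G.Adj i j) :
    sGen G i * sGen G j = sGen G j * sGen G i := by
  have hc := cartan_of_ne_of_not_adj G hij hadj
  have hc' : cartan G j i = 0 := cartan_symm G i j ▸ hc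
  refine Weyl.ext fun v => ?_
  simp only [mul_smul, sGen_smul, reflect_eq_add_smul, map_add, LinearMap.add_apply,
    map_smul, LinearMap.smul_apply, smul_eq_mul, Bform_single, hc, hc']
  module

lemma sGen_braid {i j : I} (hadj : G.Adj i j) :
    sGen G i * sGen G j * sGen G i = sGen G j * sGen G i * sGen G j := by
  have hc := cartan_of_adj G hadj
  have hc' := cartan_of_adj G hadj.symm
  refine Weyl.ext fun v => ?_
  simp only [mul_smul, sGen_smul, reflect_eq_add_smul, map_add, LinearMap.add_apply,
    map_smul, LinearMap.smul_apply, smul_eq_mul, Bform_single, hc, hc', cartan_diag]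
  module

lemma exists_weyl_smul_single_eq (hneg : NegDef G) {α : I → ℤ} (hα : IsRoot G α) :
    ∃ (w : Weyl G) (i : I), w • (Pi.single i 1 : I → ℤ) = α := by
  have hpos : ∀ α, 0 ≤ α → IsRoot G α →
      ∃ (w : Weyl G) (i : I), w • (Pi.single i 1 : I → ℤ) = α := by
    refine height_induction fun α h0 ih hα => ?_
    by_cases hs : ∃ i, α = Pi.single i 1
    · obtain ⟨i, rfl⟩ := hs
      exact ⟨1, i, one_smul _ _⟩
    push Not at hs
    obtain ⟨i, hi⟩ := hα.exists_Bform_single_eq_neg_one hneg h0 hs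
    obtain ⟨w, k, hw⟩ := ih _ (hα.sub_single_nonneg hneg h0 hi)
      (by rw [height_sub_single]; omega) (hα.sub_single hi)
    refine ⟨sGen G i * w, k, ?_⟩
    rw [mul_smul, hw, sGen_smul, reflect_eq_add_smul, Bform_sub_single, hi, cartan_diag]
    simp
  rcases hα.nonneg_or_nonpos hneg with h0 | h0
  · exact hpos α h0 hα
  · obtain ⟨w, i, hw⟩ := hpos (-α) (neg_nonneg.2 h0) (isRoot_neg G hα)
    refine ⟨w * sGen G i, i, ?_⟩
    rw [mul_smul, sGen_smul, reflect_single_self, smul_neg, hw, neg_neg]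

section AddAut

variable {M A : Type*} [Monoid M] [Add A] (ρ : M →* Multiplicative (AddAut A))

lemma toAdd_map_mul_apply (v w : M) (x : A) :
    toAdd (ρ (v * w)) x = toAdd (ρ v) (toAdd (ρ w) x) := by
  rw [map_mul]
  rfl

lemma toAdd_map_one_apply (x : A) : toAdd (ρ 1) x = x := by
  rw [map_one]
  rfl

end AddAut

section Extension

variable {A : Type*} [AddCommGroup A] (ρ : Weyl G →* Multiplicative (AddAut A)) (a : I → A)

variable (G) in
structure IsAdmissible : Prop where
  smul_self : ∀ i, toAdd (ρ (sGen G i)) (a i) = -a i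
  smul_of_not_adj : ∀ i j, i ≠ j → ¬ G.Adj i j → toAdd (ρ (sGen G i)) (a j) = a j
  smul_of_adj : ∀ i j, G.Adj i j → toAdd (ρ (sGen G i)) (a j) = toAdd (ρ (sGen G j)) (a i)

lemma toAdd_sGen_sGen (i : I) (x : A) :
    toAdd (ρ (sGen G i)) (toAdd (ρ (sGen G i)) x) = x := by
  rw [← toAdd_map_mul_apply, sGen_mul_self, toAdd_map_one_apply]

lemma toAdd_sGen_comm {i j : I} (hij : i ≠ j) (hadj : ¬ G.Adj i j) (x : A) :
    toAdd (ρ (sGen G i)) (toAdd (ρ (sGen G j)) x) =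
      toAdd (ρ (sGen G j)) (toAdd (ρ (sGen G i)) x) := by
  rw [← toAdd_map_mul_apply, sGen_mul_comm hij hadj, toAdd_map_mul_apply]

lemma toAdd_sGen_braid {i j : I} (hadj : G.Adj i j) (x : A) :
    toAdd (ρ (sGen G i)) (toAdd (ρ (sGen G j)) (toAdd (ρ (sGen G i)) x)) =
      toAdd (ρ (sGen G j)) (toAdd (ρ (sGen G i)) (toAdd (ρ (sGen G j)) x)) := by
  simp only [← toAdd_map_mul_apply, ← mul_assoc, sGen_braid hadj]

variable (G) in
/-- Follows `n` steps of a chain of simple descents `α ↦ α - e_i` (each chosen arbitrarily) down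
to a simple root `e_k`, and applies the corresponding product of the `s_i` to `a_k`. -/
def descentVal : ℕ → (I → ℤ) → A
  | 0, _ => 0
  | n + 1, α =>
    if h : ∃ i, α = Pi.single i 1 then a h.choose
    else if h' : ∃ i, Bform G α (Pi.single i 1) = -1 then
      toAdd (ρ (sGen G h'.choose)) (descentVal n (α - Pi.single h'.choose 1))
    else 0

variable (G) in
def posVal (α : I → ℤ) : A := descentVal G ρ a (height α).toNat α

lemma posVal_single (i : I) : posVal G ρ a (Pi.single i 1) = a i := by
  have h : ∃ k, (Pi.single i 1 : I → ℤ) = Pi.single k 1 := ⟨i, rfl⟩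
  have hk : h.choose = i := by
    have := congrFun h.choose_spec h.choose
    by_contra hne
    simp [hne] at this
  have hht : (height (Pi.single i 1 : I → ℤ)).toNat = 0 + 1 := by simp [height]
  rw [posVal, hht, descentVal, dif_pos h, hk]

lemma IsRoot.exists_posVal_eq (hneg : NegDef G) {α : I → ℤ} (hα : IsRoot G α) (h0 : 0 ≤ α)
    (hns : ∀ i, α ≠ Pi.single i 1) : ∃ i, Bform G α (Pi.single i 1) = -1 ∧
      posVal G ρ a α = toAdd (ρ (sGen G i)) (posVal G ρ a (α - Pi.single i 1)) := by
  have h' := hα.exists_Bform_single_eq_neg_one hneg h0 hns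
  refine ⟨h'.choose, h'.choose_spec, ?_⟩
  have h1 := one_le_height (hα.sub_single_nonneg hneg h0 h'.choose_spec)
    (hα.sub_single h'.choose_spec).ne_zero
  have hht : (height α).toNat = (height (α - Pi.single h'.choose 1)).toNat + 1 := by
    rw [height_sub_single] at h1 ⊢
    omega
  rw [posVal, hht, descentVal, dif_neg (by push Not; exact hns), dif_pos h', posVal]

lemma posVal_eq_of_Bform_eq_neg_one (hneg : NegDef G) (ha : IsAdmissible G ρ a) :
    ∀ α : I → ℤ, 0 ≤ α → IsRoot G α → ∀ j, Bform G α (Pi.single j 1) = -1 →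
      posVal G ρ a α = toAdd (ρ (sGen G j)) (posVal G ρ a (α - Pi.single j 1)) := by
  refine height_induction fun α h0 ih hα j hj => ?_
  by_cases hs : ∃ k, α = Pi.single k 1
  · obtain ⟨k, rfl⟩ := hs
    exact absurd (Bform_single G k j ▸ hj) (cartan_ne_neg_one G k j)
  push Not at hs
  obtain ⟨i, hi, hval⟩ := hα.exists_posVal_eq ρ a hneg h0 hs
  rw [hval]
  rcases eq_or_ne i j with rfl | hij
  · rfl
  by_cases hadj : G.Adj i j
  · -- `α = e_i + e_j`
    have hβ : α - Pi.single i 1 = Pi.single j 1 :=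
      (hα.sub_single hi).eq_of_Bform_eq_neg_two hneg (isRoot_single G j)
        (by rw [Bform_sub_single, hj, cartan_of_adj G hadj]; norm_num)
    rw [hβ, show α - Pi.single j 1 = Pi.single i 1 by rw [← hβ, sub_sub_cancel],
      posVal_single, posVal_single, ha.smul_of_adj i j hadj]
  · have hc := cartan_of_ne_of_not_adj G hij hadj
    have hc' := cartan_of_ne_of_not_adj G hij.symm (fun h => hadj h.symm)
    have hβ0 := hα.sub_single_nonneg hneg h0 hi
    have hγ0 := hα.sub_single_nonneg hneg h0 hj
    rw [ih _ hβ0 (by rw [height_sub_single]; omega) (hα.sub_single hi) j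
        (by rw [Bform_sub_single, hj, hc, sub_zero]),
      ih _ hγ0 (by rw [height_sub_single]; omega) (hα.sub_single hj) i
        (by rw [Bform_sub_single, hi, hc', sub_zero]),
      sub_right_comm, toAdd_sGen_comm ρ hij hadj]

lemma toAdd_sGen_posVal_of_Bform_eq_zero (hneg : NegDef G) (ha : IsAdmissible G ρ a) :
    ∀ α : I → ℤ, 0 ≤ α → IsRoot G α → ∀ j, Bform G α (Pi.single j 1) = 0 →
      toAdd (ρ (sGen G j)) (posVal G ρ a α) = posVal G ρ a α := by
  refine height_induction fun α h0 ih hα j hj => ?_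
  by_cases hs : ∃ k, α = Pi.single k 1
  · obtain ⟨k, rfl⟩ := hs
    rw [Bform_single] at hj
    have hkj : k ≠ j := by rintro rfl; simp [cartan_diag] at hj
    have hadj : ¬ G.Adj j k := fun h => by simp [cartan_of_adj G h.symm] at hj
    rw [posVal_single, ha.smul_of_not_adj j k hkj.symm hadj]
  push Not at hs
  obtain ⟨i, hi, hval⟩ := hα.exists_posVal_eq ρ a hneg h0 hs
  have hij : i ≠ j := by rintro rfl; rw [hi] at hj; simp at hj
  have hβ0 := hα.sub_single_nonneg hneg h0 hi
  have hβ := hα.sub_single hi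
  rw [hval]
  by_cases hadj : G.Adj i j
  · -- `s_j s_i s_j = s_i s_j s_i`, and `s_i` fixes `α - e_i - e_j`
    have hβj : Bform G (α - Pi.single i 1) (Pi.single j 1) = -1 := by
      rw [Bform_sub_single, hj, cartan_of_adj G hadj]; norm_num
    have hγ0 := hβ.sub_single_nonneg hneg hβ0 hβj
    rw [posVal_eq_of_Bform_eq_neg_one ρ a hneg ha _ hβ0 hβ j hβj, toAdd_sGen_braid ρ hadj.symm,
      ih _ hγ0 (by rw [height_sub_single, height_sub_single]; omega) (hβ.sub_single hβj) i
        (by rw [Bform_sub_single, Bform_sub_single, hi, cartan_diag, cartan_of_adj G hadj.symm]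
            norm_num)]
  · rw [toAdd_sGen_comm ρ hij.symm (fun h => hadj h.symm),
      ih _ hβ0 (by rw [height_sub_single]; omega) hβ j
        (by rw [Bform_sub_single, hj, cartan_of_ne_of_not_adj G hij hadj, sub_zero])]

open Classical in
variable (G) in
def rootVal (α : I → ℤ) : A := if 0 ≤ α then posVal G ρ a α else -posVal G ρ a (-α)

lemma rootVal_of_nonneg {α : I → ℤ} (h0 : 0 ≤ α) : rootVal G ρ a α = posVal G ρ a α :=
  if_pos h0

lemma IsRoot.rootVal_neg (hneg : NegDef G) {α : I → ℤ} (hα : IsRoot G α) :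
    rootVal G ρ a (-α) = -rootVal G ρ a α := by
  rcases hα.nonneg_or_nonpos hneg with h0 | h0
  · rw [rootVal, if_neg (neg_nonneg.not.2 (hα.not_nonpos_of_nonneg h0)), neg_neg,
      rootVal_of_nonneg ρ a h0]
  · rw [rootVal_of_nonneg ρ a (neg_nonneg.2 h0), rootVal,
      if_neg fun h => hα.not_nonpos_of_nonneg h h0, neg_neg]

lemma IsRoot.rootVal_sGen_smul_of_nonneg (hneg : NegDef G) (ha : IsAdmissible G ρ a)
    {α : I → ℤ} (hα : IsRoot G α) (h0 : 0 ≤ α) (j : I) :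
    rootVal G ρ a (sGen G j • α) = toAdd (ρ (sGen G j)) (rootVal G ρ a α) := by
  have hj := isRoot_single G j
  rw [sGen_smul, rootVal_of_nonneg ρ a h0]
  obtain hb | hb | hb | hb | hb : Bform G α (Pi.single j 1) = -2 ∨
      Bform G α (Pi.single j 1) = -1 ∨ Bform G α (Pi.single j 1) = 0 ∨
      Bform G α (Pi.single j 1) = 1 ∨ Bform G α (Pi.single j 1) = 2 := by
    have := hα.neg_two_le_Bform hneg hj
    have := hα.Bform_le_two hneg hj
    omega
  · obtain rfl := hα.eq_of_Bform_eq_neg_two hneg hj hb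
    rw [reflect_single_self, hj.rootVal_neg ρ a hneg, rootVal_of_nonneg ρ a h0, posVal_single,
      ha.smul_self]
  · have hr : reflect G j α = α - Pi.single j 1 := by
      simp [reflect_eq_add_smul, hb, sub_eq_add_neg]
    rw [hr, rootVal_of_nonneg ρ a (hα.sub_single_nonneg hneg h0 hb),
      posVal_eq_of_Bform_eq_neg_one ρ a hneg ha α h0 hα j hb, toAdd_sGen_sGen]
  · rw [show reflect G j α = α by simp [reflect_eq_add_smul, hb], rootVal_of_nonneg ρ a h0,
      toAdd_sGen_posVal_of_Bform_eq_zero ρ a hneg ha α h0 hα j hb]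
  · have hr : reflect G j α = α + Pi.single j 1 := by simp [reflect_eq_add_smul, hb]
    have h0' : 0 ≤ α + Pi.single j 1 := add_nonneg h0 (Pi.single_nonneg.2 zero_le_one)
    have hα' : IsRoot G (α + Pi.single j 1) := hr ▸ isRoot_reflect G j hα
    rw [hr, rootVal_of_nonneg ρ a h0', posVal_eq_of_Bform_eq_neg_one ρ a hneg ha _ h0' hα' j
      (by rw [Bform_add_single, hb, cartan_diag]; norm_num), add_sub_cancel_right]
  · have := h0 j
    rw [hα.eq_of_Bform_eq_neg_two hneg (isRoot_neg G hj) (by simp [hb])] at this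
    simp at this

lemma IsRoot.rootVal_smul (hneg : NegDef G) (ha : IsAdmissible G ρ a) {α : I → ℤ}
    (hα : IsRoot G α) (w : Weyl G) :
    rootVal G ρ a (w • α) = toAdd (ρ w) (rootVal G ρ a α) := by
  have hw : w ∈ Subgroup.closure (Set.range (sGen G)) :=
    closure_range_sGen G ▸ Subgroup.mem_top w
  induction hw using Subgroup.closure_induction generalizing α with
  | mem x hx =>
    obtain ⟨j, rfl⟩ := hx
    rcases hα.nonneg_or_nonpos hneg with h0 | h0
    · exact hα.rootVal_sGen_smul_of_nonneg ρ a hneg ha h0 j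
    · have h := (isRoot_neg G hα).rootVal_sGen_smul_of_nonneg ρ a hneg ha (neg_nonneg.2 h0) j
      rwa [smul_neg, (hα.smul _).rootVal_neg ρ a hneg, hα.rootVal_neg ρ a hneg, map_neg,
        neg_inj] at h
  | one => rw [one_smul, toAdd_map_one_apply]
  | mul x y _ _ hx hy =>
    rw [mul_smul, hx (hα.smul y), hy hα, toAdd_map_mul_apply]
  | inv x _ hx =>
    have h := hx (hα.smul x⁻¹)
    rw [smul_inv_smul] at h
    rw [h, ← toAdd_map_mul_apply, inv_mul_cancel, toAdd_map_one_apply]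

end Extension

def pgen (α : Root G) : Root G →₀ ℤ :=
  Finsupp.single α 1 - Finsupp.single (negRoot G α) 1

lemma pgen_mem_Pbar (α : Root G) : pgen α ∈ Pbar G :=
  AddSubgroup.subset_closure ⟨α, rfl⟩

lemma rootSmul_negRoot (w : Weyl G) (α : Root G) :
    rootSmul G w (negRoot G α) = negRoot G (rootSmul G w α) :=
  Subtype.ext (smul_neg w α.1)

lemma wZPhi_pgen (w : Weyl G) (α : Root G) : wZPhi G w (pgen α) = pgen (rootSmul G w α) := by
  simp only [pgen, wZPhi, map_sub, Finsupp.mapDomain.addMonoidHom_apply, Finsupp.mapDomain_single,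
    rootSmul_negRoot]

lemma wZPhi_mem_Pbar (w : Weyl G) {x : Root G →₀ ℤ} (hx : x ∈ Pbar G) :
    wZPhi G w x ∈ Pbar G := by
  refine (AddSubgroup.closure_le (K := (Pbar G).comap (wZPhi G w))).2 ?_ hx
  rintro _ ⟨α, rfl⟩
  show wZPhi G w (pgen α) ∈ Pbar G
  rw [wZPhi_pgen]
  exact pgen_mem_Pbar _

section Extension
variable {A : Type*} [AddCommGroup A] (ρ : Weyl G →* Multiplicative (AddAut A)) (a : I → A)

open Classical in
variable (G) in
/-- Sends `T_α` to the value at `α` for positive `α` and to `0` for negative `α`, so that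
`T_α - T_{-α}` goes to the value at `α` in both cases. -/
def liftVal : (Root G →₀ ℤ) →+ A :=
  Finsupp.liftAddHom fun α => zmultiplesHom A (if 0 ≤ α.1 then posVal G ρ a α.1 else 0)

open Classical in
lemma liftVal_single (α : Root G) :
    liftVal G ρ a (Finsupp.single α 1) = if 0 ≤ α.1 then posVal G ρ a α.1 else 0 := by
  rw [liftVal, Finsupp.liftAddHom_apply_single, zmultiplesHom_apply, one_smul]

open Classical in
lemma liftVal_pgen (hneg : NegDef G) (α : Root G) :
    liftVal G ρ a (pgen α) = rootVal G ρ a α.1 := by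
  rw [pgen, map_sub, liftVal_single, liftVal_single, rootVal]
  change _ - (if 0 ≤ -α.1 then posVal G ρ a (-α.1) else 0) = _
  rcases α.2.nonneg_or_nonpos hneg with h0 | h0
  · rw [if_pos h0, if_neg (neg_nonneg.not.2 (α.2.not_nonpos_of_nonneg h0)), if_pos h0, sub_zero]
  · have h0' : ¬ 0 ≤ α.1 := fun h => α.2.not_nonpos_of_nonneg h h0
    rw [if_neg h0', if_pos (neg_nonneg.2 h0), if_neg h0', zero_sub]

lemma liftVal_pgen_simpleRoot (hneg : NegDef G) (i : I) :
    liftVal G ρ a (pgen (simpleRoot G i)) = a i :=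
  (liftVal_pgen ρ a hneg _).trans
    ((rootVal_of_nonneg ρ a (Pi.single_nonneg.2 zero_le_one)).trans (posVal_single ρ a i))

lemma liftVal_wZPhi (hneg : NegDef G) (ha : IsAdmissible G ρ a) (w : Weyl G)
    {x : Root G →₀ ℤ} (hx : x ∈ Pbar G) :
    liftVal G ρ a (wZPhi G w x) = toAdd (ρ w) (liftVal G ρ a x) := by
  refine AddMonoidHom.eqOn_closure (f := (liftVal G ρ a).comp (wZPhi G w))
    (g := (toAdd (ρ w)).toAddMonoidHom.comp (liftVal G ρ a)) ?_ hx
  rintro _ ⟨α, rfl⟩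
  show liftVal G ρ a (wZPhi G w (pgen α)) = toAdd (ρ w) (liftVal G ρ a (pgen α))
  rw [wZPhi_pgen, liftVal_pgen ρ a hneg, liftVal_pgen ρ a hneg]
  exact α.2.rootVal_smul ρ a hneg ha w

lemma Pbar_hom_ext (hneg : NegDef G) {f g : Pbar G →+ A}
    (hsimple : ∀ i, f ⟨pgen (simpleRoot G i), pgen_mem_Pbar _⟩ =
      g ⟨pgen (simpleRoot G i), pgen_mem_Pbar _⟩)
    (hf : ∀ w (x : Pbar G), f ⟨wZPhi G w x, wZPhi_mem_Pbar w x.2⟩ = toAdd (ρ w) (f x))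
    (hg : ∀ w (x : Pbar G), g ⟨wZPhi G w x, wZPhi_mem_Pbar w x.2⟩ = toAdd (ρ w) (g x)) :
    f = g := by
  refine AddMonoidHom.eq_of_eqOn_dense (G := Pbar G)
    (s := Subtype.val ⁻¹' {x | ∃ α, x = pgen α}) AddSubgroup.closure_closure_coe_preimage ?_
  rintro ⟨_, hx⟩ ⟨α, rfl⟩
  obtain ⟨w, i, hw⟩ := exists_weyl_smul_single_eq hneg α.2
  have hα : (⟨pgen α, hx⟩ : Pbar G) =
      ⟨wZPhi G w (pgen (simpleRoot G i)), wZPhi_mem_Pbar w (pgen_mem_Pbar _)⟩ := by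
    rw [Subtype.mk.injEq, wZPhi_pgen]
    congr 1
    exact Subtype.ext hw.symm
  rw [hα]
  calc f _ = toAdd (ρ w) (f ⟨pgen (simpleRoot G i), pgen_mem_Pbar _⟩) := hf w _
    _ = toAdd (ρ w) (g ⟨pgen (simpleRoot G i), pgen_mem_Pbar _⟩) := by rw [hsimple]
    _ = g _ := (hg w _).symm

end Extension

end ADE

open ADE

variable {I : Type*} [Fintype I] [DecidableEq I]

theorem exists_unique_equivariant_hom_from_Pbar_general
    (G : SimpleGraph I) [DecidableRel G.Adj] (hneg : NegDef G)
    {A : Type*} [AddCommGroup A] (ρ : ↥(Weyl G) →* Multiplicative (AddAut A)) (a : I → A)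
    (hdiag : ∀ i : I, Multiplicative.toAdd (ρ (sGen G i)) (a i) = - a i)
    (hnonadj : ∀ i j : I, i ≠ j → ¬ G.Adj i j → Multiplicative.toAdd (ρ (sGen G i)) (a j) = a j)
    (hadj : ∀ i j : I, G.Adj i j → Multiplicative.toAdd (ρ (sGen G i)) (a j) = Multiplicative.toAdd (ρ (sGen G j)) (a i)) :
    (∀ (w : ↥(Weyl G)), ∀ x ∈ Pbar G, wZPhi G w x ∈ Pbar G) ∧
    ∃! f : ↥(Pbar G) →+ A,
      (∀ i : I,
        f ⟨Finsupp.single (simpleRoot G i) 1 - Finsupp.single (negRoot G (simpleRoot G i)) 1,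
          AddSubgroup.subset_closure ⟨simpleRoot G i, rfl⟩⟩ = a i) ∧
      (∀ (w : ↥(Weyl G)) (x : ↥(Pbar G)) (hx : wZPhi G w x.1 ∈ Pbar G),
        f ⟨wZPhi G w x.1, hx⟩ = Multiplicative.toAdd (ρ w) (f x)) := by
  have ha : IsAdmissible G ρ a := ⟨hdiag, hnonadj, hadj⟩
  have hequiv : ∀ (w : Weyl G) (x : Pbar G),
      liftVal G ρ a (wZPhi G w x) = toAdd (ρ w) (liftVal G ρ a x) :=
    fun w x => liftVal_wZPhi ρ a hneg ha w x.2
  refine ⟨fun w x hx => wZPhi_mem_Pbar w hx, (liftVal G ρ a).comp (Pbar G).subtype,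
    ⟨liftVal_pgen_simpleRoot ρ a hneg, fun w x _ => hequiv w x⟩, fun f hf => ?_⟩
  exact Pbar_hom_ext ρ hneg (fun i => (hf.1 i).trans (liftVal_pgen_simpleRoot ρ a hneg i).symm)
    (fun w x => hf.2 w x _) hequiv

/-- the subgroup `P̄ ⊆ ℤΦ` generated by the `T_α − T_{−α}` is stable under the
`W`-action, and it has the following universal property: given elements `a_i` of a
`W`-module `A` with `s_i · a_i = −a_i`, `s_i · a_j = a_j` for `i ≠ j` non-adjacent and
`s_i · a_j = s_j · a_i` for `i, j` adjacent, there is a unique `W`-equivariant homomorphism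
`P̄ → A` with `T_{e_i} − T_{−e_i} ↦ a_i`. -/
theorem exists_unique_equivariant_hom_from_Pbar
    (G : SimpleGraph I) [DecidableRel G.Adj] (hconn : G.Connected) (hneg : NegDef G)
    {A : Type*} [AddCommGroup A] (ρ : ↥(Weyl G) →* Multiplicative (AddAut A)) (a : I → A)
    (hdiag : ∀ i : I, Multiplicative.toAdd (ρ (sGen G i)) (a i) = - a i)
    (hnonadj : ∀ i j : I, i ≠ j → ¬ G.Adj i j → Multiplicative.toAdd (ρ (sGen G i)) (a j) = a j)
    (hadj : ∀ i j : I, G.Adj i j → Multiplicative.toAdd (ρ (sGen G i)) (a j) = Multiplicative.toAdd (ρ (sGen G j)) (a i)) :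
    (∀ (w : ↥(Weyl G)), ∀ x ∈ Pbar G, wZPhi G w x ∈ Pbar G) ∧
    ∃! f : ↥(Pbar G) →+ A,
      (∀ i : I,
        f ⟨Finsupp.single (simpleRoot G i) 1 - Finsupp.single (negRoot G (simpleRoot G i)) 1,
          AddSubgroup.subset_closure ⟨simpleRoot G i, rfl⟩⟩ = a i) ∧
      (∀ (w : ↥(Weyl G)) (x : ↥(Pbar G)) (hx : wZPhi G w x.1 ∈ Pbar G),
        f ⟨wZPhi G w x.1, hx⟩ = Multiplicative.toAdd (ρ w) (f x)) :=
  exists_unique_equivariant_hom_from_Pbar_general G hneg ρ a hdiag hnonadj hadj
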